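/- arXiv:2312.02828 — 2 statements merged into one kernel-verified Lean document; each statement's English description precedes it below -/
import Mathlib

section
/- (Robbins–Siegmund) Let (z_t), (f_t), (g_t), (h_t) be nonnegative stochastic processes adapted to a filtration (F_t) satisfying E[z_{t+1} | F_t] ≤ (1+f_t) z_t + g_t - h_t almost surely for all t. Then on the event Ω₀ = {Σ f_t < ∞ and Σ g_t < ∞}, the limit lim_{t→∞} z_t exists (almost surely on Ω₀) and Σ_{t=0}^∞ h_t < ∞ almost surely on Ω₀. -/
/-!
Dividing `z t` by the compounding factor `∏_{s < t} (1 + f s)`, and `g t`, `h t` by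
`∏_{s ≤ t} (1 + f s)`, reduces the theorem to the case `f = 0`. There `z t + ∑_{s < t} (h s - g s)`
would be a supermartingale, except that `g` and `h` need not be integrable and the process need
not be bounded below. So for each level `n` we freeze `z` once `∑_{s ≤ t} g s > n` and drop the
later terms of `g` and `h`: now `g`, and through `h t ≤ z t + g t` also `h`, are integrable, and
the supermartingale is bounded below by `-n`, hence converges a.s. On `{∑ g ≤ n}` nothing was
changed, and letting `n` run through `ℕ` covers `{∑ g < ∞}`.
-/

open MeasureTheory Filter Finset Topology

namespace MeasureTheory

variable {Ω : Type*} {m0 : MeasurableSpace Ω} {μ : Measure Ω} {ℱ : Filtration ℕ m0}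

theorem Supermartingale.exists_ae_tendsto_of_bddBelow [IsFiniteMeasure μ] {U : ℕ → Ω → ℝ}
    {C : ℝ} (hU : Supermartingale U ℱ μ) (hC : ∀ n ω, C ≤ U n ω) :
    ∀ᵐ ω ∂μ, ∃ c, Tendsto (fun n => U n ω) atTop (𝓝 c) := by
  have hnorm : ∀ n, ∫ ω, ‖U n ω‖ ∂μ ≤ ∫ ω, U 0 ω ∂μ + 2 * |C| * μ.real Set.univ := by
    intro n
    have hbound : ∀ ω, ‖U n ω‖ ≤ U n ω + 2 * |C| := fun ω => by
      rw [Real.norm_eq_abs, abs_le]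
      constructor <;> linarith [hC n ω, neg_abs_le C, abs_nonneg C]
    have hmono : ∫ ω, U n ω ∂μ ≤ ∫ ω, U 0 ω ∂μ := by
      simpa using hU.setIntegral_le (Nat.zero_le n) MeasurableSet.univ
    calc ∫ ω, ‖U n ω‖ ∂μ ≤ ∫ ω, (U n ω + 2 * |C|) ∂μ :=
          integral_mono (hU.integrable n).norm ((hU.integrable n).add (integrable_const _)) hbound
      _ = ∫ ω, U n ω ∂μ + 2 * |C| * μ.real Set.univ := by
          rw [integral_add (hU.integrable n) (integrable_const _), integral_const, smul_eq_mul,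
            mul_comm]
      _ ≤ _ := by linarith
  have hbdd : ∀ n, eLpNorm ((-U) n) 1 μ ≤
      ENNReal.ofReal (∫ ω, U 0 ω ∂μ + 2 * |C| * μ.real Set.univ) := fun n => by
    rw [Pi.neg_apply, eLpNorm_neg, eLpNorm_one_eq_lintegral_enorm,
      ← ofReal_integral_norm_eq_lintegral_enorm (hU.integrable n)]
    exact ENNReal.ofReal_le_ofReal (hnorm n)
  filter_upwards [hU.neg.exists_ae_tendsto_of_bdd hbdd] with ω ⟨c, hc⟩
  exact ⟨-c, by simpa using hc.neg⟩

theorem Adapted.exists_nonneg_ae_eq {X : ℕ → Ω → ℝ} (hX : Adapted ℱ X)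
    (hX0 : ∀ t, ∀ᵐ ω ∂μ, 0 ≤ X t ω) :
    ∃ Y : ℕ → Ω → ℝ, (∀ t ω, 0 ≤ Y t ω) ∧ Adapted ℱ Y ∧
      ∀ᵐ ω ∂μ, (fun t => Y t ω) = fun t => X t ω :=
  ⟨fun t ω => max (X t ω) 0, fun _ _ => le_max_right _ _, fun t => (hX t).max measurable_const,
    (ae_all_iff.2 hX0).mono fun _ hω => funext fun t => max_eq_left (hω t)⟩

end MeasureTheory

theorem tendsto_and_summable_of_tendsto_add_sum {z h : ℕ → ℝ} {c : ℝ} (hz : ∀ t, 0 ≤ z t)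
    (hh : ∀ t, 0 ≤ h t) (hc : Tendsto (fun t => z t + ∑ s ∈ range t, h s) atTop (𝓝 c)) :
    (∃ l, Tendsto z atTop (𝓝 l)) ∧ Summable h := by
  obtain ⟨B, hB⟩ := hc.bddAbove_range
  have hsum : Summable h := summable_of_sum_range_le hh fun t =>
    (le_add_of_nonneg_left (hz t)).trans (hB ⟨t, rfl⟩)
  refine ⟨⟨c - ∑' s, h s, ?_⟩, hsum⟩
  simpa using hc.sub hsum.hasSum.tendsto_sum_nat

theorem tendsto_and_summable_of_tendsto_inv_mul {P z h : ℕ → ℝ} {p l : ℝ}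
    (hP : Tendsto P atTop (𝓝 p)) (hP0 : ∀ t, 0 < P t) (hh0 : ∀ t, 0 ≤ h t)
    (hz : Tendsto (fun t => (P t)⁻¹ * z t) atTop (𝓝 l))
    (hh : Summable fun t => (P (t + 1))⁻¹ * h t) :
    (∃ l, Tendsto z atTop (𝓝 l)) ∧ Summable h := by
  refine ⟨⟨p * l, (hP.mul hz).congr fun t => ?_⟩, ?_⟩
  · rw [mul_inv_cancel_left₀ (hP0 t).ne']
  obtain ⟨B, hB⟩ := hP.bddAbove_range
  refine (hh.mul_left B).of_nonneg_of_le hh0 fun t => ?_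
  calc h t = P (t + 1) * ((P (t + 1))⁻¹ * h t) := by rw [mul_inv_cancel_left₀ (hP0 _).ne']
    _ ≤ B * ((P (t + 1))⁻¹ * h t) :=
      mul_le_mul_of_nonneg_right (hB ⟨t + 1, rfl⟩) (mul_nonneg (inv_nonneg.2 (hP0 _).le) (hh0 t))

theorem sum_range_ite_sum_le {x : ℕ → ℝ} {a : ℝ} (hx : ∀ t, 0 ≤ x t) (ha : 0 ≤ a) (T : ℕ) :
    ∑ t ∈ range T, (if ∑ s ∈ range (t + 1), x s ≤ a then x t else 0) ≤ a := by
  induction T with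
  | zero => simpa using ha
  | succ T ih =>
    by_cases hT : ∑ s ∈ range (T + 1), x s ≤ a
    · refine le_trans (sum_le_sum fun t _ => ?_) hT
      split_ifs <;> simp [hx t]
    · rwa [sum_range_succ, if_neg hT, add_zero]

namespace RobbinsSiegmund

variable {Ω : Type*} {m0 : MeasurableSpace Ω} {μ : Measure Ω} {ℱ : Filtration ℕ m0}
  {z f g h : ℕ → Ω → ℝ}

theorem supermartingale_add_sum_sub [IsFiniteMeasure μ] (hz : Adapted ℱ z) (hg : Adapted ℱ g)
    (hh : Adapted ℱ h) (hzi : ∀ t, Integrable (z t) μ) (hgi : ∀ t, Integrable (g t) μ)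
    (hhi : ∀ t, Integrable (h t) μ) (hrec : ∀ t, μ[z (t + 1)|ℱ t] ≤ᵐ[μ] z t + g t - h t) :
    Supermartingale (fun t ω => z t ω + ∑ s ∈ range t, (h s ω - g s ω)) ℱ μ := by
  have hsum_meas : ∀ t n, t ≤ n + 1 →
      StronglyMeasurable[ℱ n] fun ω => ∑ s ∈ range t, (h s ω - g s ω) :=
    fun t n htn => Finset.stronglyMeasurable_fun_sum _ fun s hs =>
      (((hh s).sub (hg s)).mono (ℱ.mono (by grind)) le_rfl).stronglyMeasurable
  have hsum_int : ∀ t, Integrable (fun ω => ∑ s ∈ range t, (h s ω - g s ω)) μ :=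
    fun t => integrable_finsetSum _ fun s _ => (hhi s).sub (hgi s)
  refine supermartingale_nat (fun t => ?_) (fun t => (hzi t).add (hsum_int t)) fun t => ?_
  · exact (hz t).stronglyMeasurable.add (hsum_meas t t (by omega))
  · have hpull : μ[fun ω => z (t + 1) ω + ∑ s ∈ range (t + 1), (h s ω - g s ω)|ℱ t] =ᵐ[μ]
        μ[z (t + 1)|ℱ t] + fun ω => ∑ s ∈ range (t + 1), (h s ω - g s ω) :=
      (condExp_add (hzi (t + 1)) (hsum_int (t + 1)) _).trans <| by
        rw [condExp_of_stronglyMeasurable (ℱ.le t) (hsum_meas (t + 1) t le_rfl)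
          (hsum_int (t + 1))]
    filter_upwards [hpull, hrec t] with ω hω hrecω
    rw [hω, Pi.add_apply, sum_range_succ]
    simp only [Pi.add_apply, Pi.sub_apply] at hrecω
    linarith

theorem ae_tendsto_and_summable_of_sum_le [IsFiniteMeasure μ] {C : ℝ}
    (hz0 : ∀ t ω, 0 ≤ z t ω) (hg0 : ∀ t ω, 0 ≤ g t ω) (hh0 : ∀ t ω, 0 ≤ h t ω)
    (hz : Adapted ℱ z) (hg : Adapted ℱ g) (hh : Adapted ℱ h) (hzi : ∀ t, Integrable (z t) μ)
    (hgC : ∀ t ω, ∑ s ∈ range t, g s ω ≤ C)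
    (hrec : ∀ t, μ[z (t + 1)|ℱ t] ≤ᵐ[μ] z t + g t - h t) :
    ∀ᵐ ω ∂μ, (∃ l, Tendsto (fun t => z t ω) atTop (𝓝 l)) ∧ Summable fun t => h t ω := by
  have hgi : ∀ t, Integrable (g t) μ := fun t =>
    Integrable.of_bound ((hg t).mono (ℱ.le t) le_rfl).aestronglyMeasurable C <|
      ae_of_all _ fun ω => by
        rw [Real.norm_eq_abs, abs_of_nonneg (hg0 t ω)]
        exact (single_le_sum (fun s _ => hg0 s ω) (self_mem_range_succ t)).trans
          (hgC (t + 1) ω)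
  -- `h t ≤ z t + g t` because the conditional expectation of `z (t + 1) ≥ 0` is nonnegative
  have hhi : ∀ t, Integrable (h t) μ := fun t => by
    refine ((hzi t).add (hgi t)).mono' ((hh t).mono (ℱ.le t) le_rfl).aestronglyMeasurable ?_
    filter_upwards [hrec t, condExp_nonneg (m := ℱ t) (ae_of_all μ (hz0 (t + 1)))]
      with ω hω hω0
    simp only [Pi.add_apply, Pi.sub_apply, Pi.zero_apply, Real.norm_eq_abs,
      abs_of_nonneg (hh0 t ω)] at hω hω0 ⊢
    linarith
  have hU := supermartingale_add_sum_sub hz hg hh hzi hgi hhi hrec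
  have hUC : ∀ t ω, -C ≤ z t ω + ∑ s ∈ range t, (h s ω - g s ω) := fun t ω => by
    rw [sum_sub_distrib]
    linarith [hz0 t ω, sum_nonneg fun s (_ : s ∈ range t) => hh0 s ω, hgC t ω]
  filter_upwards [hU.exists_ae_tendsto_of_bddBelow hUC] with ω ⟨c, hc⟩
  have hgsum : Summable fun t => g t ω := summable_of_sum_range_le (hg0 · ω) (hgC · ω)
  refine tendsto_and_summable_of_tendsto_add_sum (hz0 · ω) (hh0 · ω)
    ((hc.add hgsum.hasSum.tendsto_sum_nat).congr fun t => ?_)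
  rw [sum_sub_distrib]
  ring

/-- `z` stopped at the first time `t` with `ω ∉ A t`. -/
noncomputable def stoppedAtExit (A : ℕ → Set Ω) (z : ℕ → Ω → ℝ) : ℕ → Ω → ℝ
  | 0 => z 0
  | t + 1 => (A t).indicator (z (t + 1)) + (A t)ᶜ.indicator (stoppedAtExit A z t)

section Stopping

variable {A : ℕ → Set Ω} {t : ℕ} {ω : Ω}

theorem stoppedAtExit_succ :
    stoppedAtExit A z (t + 1) =
      (A t).indicator (z (t + 1)) + (A t)ᶜ.indicator (stoppedAtExit A z t) :=
  rfl

theorem stoppedAtExit_eq_of_mem (hA : Antitone A) (hω : ω ∈ A t) :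
    stoppedAtExit A z t ω = z t ω := by
  cases t with
  | zero => rfl
  | succ t => simp [stoppedAtExit_succ, hA t.le_succ hω]

theorem stoppedAtExit_nonneg (hz0 : ∀ t ω, 0 ≤ z t ω) : 0 ≤ stoppedAtExit A z t ω := by
  induction t with
  | zero => exact hz0 0 ω
  | succ t ih =>
    by_cases hω : ω ∈ A t <;> simp [stoppedAtExit_succ, hω, hz0 (t + 1) ω, ih]

theorem adapted_stoppedAtExit (hA : ∀ t, MeasurableSet[ℱ t] (A t)) (hz : Adapted ℱ z) :
    Adapted ℱ (stoppedAtExit A z) := by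
  intro t
  induction t with
  | zero => exact hz 0
  | succ t ih =>
    have hAt : MeasurableSet[ℱ (t + 1)] (A t) := ℱ.mono t.le_succ _ (hA t)
    exact ((hz (t + 1)).indicator hAt).add
      ((ih.mono (ℱ.mono t.le_succ) le_rfl).indicator hAt.compl)

theorem integrable_stoppedAtExit (hA : ∀ t, MeasurableSet (A t))
    (hzi : ∀ t, Integrable (z t) μ) :
    Integrable (stoppedAtExit A z t) μ := by
  induction t with
  | zero => exact hzi 0
  | succ t ih => exact ((hzi (t + 1)).indicator (hA t)).add (ih.indicator (hA t).compl)

theorem condExp_stoppedAtExit_le [IsFiniteMeasure μ] (hA : ∀ t, MeasurableSet[ℱ t] (A t))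
    (hA' : Antitone A) (hz : Adapted ℱ z) (hzi : ∀ t, Integrable (z t) μ)
    (hrec : ∀ t, μ[z (t + 1)|ℱ t] ≤ᵐ[μ] z t + g t - h t) (t : ℕ) :
    μ[stoppedAtExit A z (t + 1)|ℱ t] ≤ᵐ[μ]
      stoppedAtExit A z t + (A t).indicator (g t) - (A t).indicator (h t) := by
  have hAm : ∀ t, MeasurableSet (A t) := fun t => ℱ.le t _ (hA t)
  have hstop :
      μ[(A t)ᶜ.indicator (stoppedAtExit A z t)|ℱ t] = (A t)ᶜ.indicator (stoppedAtExit A z t) :=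
    condExp_of_stronglyMeasurable (ℱ.le t)
      (((adapted_stoppedAtExit hA hz t).indicator (hA t).compl).stronglyMeasurable)
      ((integrable_stoppedAtExit hAm hzi).indicator (hAm t).compl)
  filter_upwards [condExp_add ((hzi (t + 1)).indicator (hAm t))
      ((integrable_stoppedAtExit hAm hzi).indicator (hAm t).compl) (ℱ t),
    condExp_indicator (hzi (t + 1)) (hA t), hrec t] with ω hsplit hind hrecω
  rw [stoppedAtExit_succ, hsplit, Pi.add_apply, hind, hstop]
  by_cases hω : ω ∈ A t
  · simpa [hω, stoppedAtExit_eq_of_mem hA' hω] using hrecω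
  · simp [hω]

end Stopping

def partialSumLE (g : ℕ → Ω → ℝ) (a : ℝ) (t : ℕ) : Set Ω := {ω | ∑ s ∈ range (t + 1), g s ω ≤ a}

theorem measurableSet_partialSumLE (hg : Adapted ℱ g) (a : ℝ) (t : ℕ) :
    MeasurableSet[ℱ t] (partialSumLE g a t) :=
  measurableSet_le (Finset.measurable_sum _ fun s hs =>
    (hg s).mono (ℱ.mono (Nat.lt_succ_iff.1 (mem_range.1 hs))) le_rfl) measurable_const

theorem antitone_partialSumLE (hg0 : ∀ t ω, 0 ≤ g t ω) (a : ℝ) : Antitone (partialSumLE g a) :=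
  antitone_nat_of_succ_le fun t ω (hω : ∑ s ∈ range (t + 2), g s ω ≤ a) =>
    show ∑ s ∈ range (t + 1), g s ω ≤ a from
      le_trans (sum_le_sum_of_subset_of_nonneg (range_subset_range.2 (t + 1).le_succ)
        fun s _ _ => hg0 s ω) hω

theorem sum_indicator_partialSumLE_le (hg0 : ∀ t ω, 0 ≤ g t ω) {a : ℝ} (ha : 0 ≤ a) (T : ℕ)
    (ω : Ω) :
    ∑ t ∈ range T, (partialSumLE g a t).indicator (g t) ω ≤ a := by
  simpa only [Set.indicator_apply, partialSumLE, Set.mem_ofPred_eq] using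
    sum_range_ite_sum_le (hg0 · ω) ha T

theorem ae_tendsto_and_summable_of_summable [IsFiniteMeasure μ]
    (hz0 : ∀ t ω, 0 ≤ z t ω) (hg0 : ∀ t ω, 0 ≤ g t ω) (hh0 : ∀ t ω, 0 ≤ h t ω)
    (hz : Adapted ℱ z) (hg : Adapted ℱ g) (hh : Adapted ℱ h) (hzi : ∀ t, Integrable (z t) μ)
    (hrec : ∀ t, μ[z (t + 1)|ℱ t] ≤ᵐ[μ] z t + g t - h t) :
    ∀ᵐ ω ∂μ, Summable (fun t => g t ω) →
      (∃ l, Tendsto (fun t => z t ω) atTop (𝓝 l)) ∧ Summable fun t => h t ω := by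
  have hA := measurableSet_partialSumLE hg
  have hA' := antitone_partialSumLE hg0
  have hstopped : ∀ n : ℕ, ∀ᵐ ω ∂μ,
      (∃ l, Tendsto (fun t => stoppedAtExit (partialSumLE g n) z t ω) atTop (𝓝 l)) ∧
        Summable fun t => (partialSumLE g n t).indicator (h t) ω := fun n =>
    ae_tendsto_and_summable_of_sum_le (fun t ω => stoppedAtExit_nonneg hz0)
      (fun t => Set.indicator_nonneg fun ω _ => hg0 t ω)
      (fun t => Set.indicator_nonneg fun ω _ => hh0 t ω)
      (adapted_stoppedAtExit (hA n) hz) (fun t => (hg t).indicator (hA n t))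
      (fun t => (hh t).indicator (hA n t))
      (fun t => integrable_stoppedAtExit (fun t => ℱ.le t _ (hA n t)) hzi)
      (sum_indicator_partialSumLE_le hg0 n.cast_nonneg)
      (condExp_stoppedAtExit_le (hA n) (hA' n) hz hzi hrec)
  filter_upwards [ae_all_iff.2 hstopped] with ω hω hgsum
  obtain ⟨n, hn⟩ := exists_nat_ge (∑' t, g t ω)
  have hmem : ∀ t, ω ∈ partialSumLE g n t := fun t =>
    (hgsum.sum_le_tsum _ fun s _ => hg0 s ω).trans hn
  have hz_eq : (fun t => stoppedAtExit (partialSumLE g n) z t ω) = fun t => z t ω :=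
    funext fun t => stoppedAtExit_eq_of_mem (hA' n) (hmem t)
  have hh_eq : (fun t => (partialSumLE g n t).indicator (h t) ω) = fun t => h t ω :=
    funext fun t => Set.indicator_of_mem (hmem t) _
  simpa only [hz_eq, hh_eq] using hω n

def prodOneAdd (f : ℕ → Ω → ℝ) (t : ℕ) (ω : Ω) : ℝ := ∏ s ∈ range t, (1 + f s ω)

section Compounding

variable {t : ℕ} {ω : Ω}

theorem prodOneAdd_succ : prodOneAdd f (t + 1) ω = prodOneAdd f t ω * (1 + f t ω) :=
  prod_range_succ _ _

theorem one_le_prodOneAdd (hf0 : ∀ t ω, 0 ≤ f t ω) : 1 ≤ prodOneAdd f t ω :=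
  one_le_prod fun s _ => le_add_of_nonneg_right (hf0 s ω)

theorem prodOneAdd_pos (hf0 : ∀ t ω, 0 ≤ f t ω) : 0 < prodOneAdd f t ω :=
  zero_lt_one.trans_le (one_le_prodOneAdd hf0)

theorem measurable_prodOneAdd (hf : Adapted ℱ f) {n : ℕ} (htn : t ≤ n + 1) :
    Measurable[ℱ n] (prodOneAdd f t) :=
  Finset.measurable_prod _ fun s hs =>
    measurable_const.add ((hf s).mono (ℱ.mono (by grind)) le_rfl)

theorem tendsto_prodOneAdd (hf : Summable fun t => f t ω) :
    ∃ p, Tendsto (fun t => prodOneAdd f t ω) atTop (𝓝 p) :=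
  ⟨_, (Real.multipliable_one_add_of_summable hf).hasProd.tendsto_prod_nat⟩

theorem inv_prodOneAdd_le_one (hf0 : ∀ t ω, 0 ≤ f t ω) : (prodOneAdd f t ω)⁻¹ ≤ 1 :=
  inv_le_one_of_one_le₀ (one_le_prodOneAdd hf0)

theorem integrable_inv_prodOneAdd_mul (hf0 : ∀ t ω, 0 ≤ f t ω) (hf : Adapted ℱ f) {X : Ω → ℝ}
    (hX : Integrable X μ) : Integrable (fun ω => (prodOneAdd f t ω)⁻¹ * X ω) μ :=
  hX.bdd_mul (c := 1)
    ((measurable_prodOneAdd (n := t) hf t.le_succ).inv.mono (ℱ.le t) le_rfl).aestronglyMeasurable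
    <| ae_of_all _ fun ω => by
      rw [Real.norm_eq_abs, abs_of_pos (inv_pos.2 (prodOneAdd_pos hf0))]
      exact inv_prodOneAdd_le_one hf0

theorem condExp_inv_prodOneAdd_mul_le [IsFiniteMeasure μ] (hf0 : ∀ t ω, 0 ≤ f t ω)
    (hf : Adapted ℱ f) (hzi : Integrable (z (t + 1)) μ)
    (hrec : ∀ᵐ ω ∂μ, μ[z (t + 1)|ℱ t] ω ≤ (1 + f t ω) * z t ω + g t ω - h t ω) :
    μ[fun ω => (prodOneAdd f (t + 1) ω)⁻¹ * z (t + 1) ω|ℱ t] ≤ᵐ[μ] fun ω =>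
      (prodOneAdd f t ω)⁻¹ * z t ω + (prodOneAdd f (t + 1) ω)⁻¹ * g t ω
        - (prodOneAdd f (t + 1) ω)⁻¹ * h t ω := by
  have hPinv : StronglyMeasurable[ℱ t] fun ω => (prodOneAdd f (t + 1) ω)⁻¹ :=
    (measurable_prodOneAdd hf le_rfl).inv.stronglyMeasurable
  filter_upwards [condExp_mul_of_stronglyMeasurable_left hPinv
    (integrable_inv_prodOneAdd_mul hf0 hf hzi) hzi, hrec] with ω hpull hω
  have hP : 0 < prodOneAdd f t ω := prodOneAdd_pos hf0
  have hf1 : 0 < 1 + f t ω := by linarith [hf0 t ω]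
  calc _ = (prodOneAdd f t ω * (1 + f t ω))⁻¹ * μ[z (t + 1)|ℱ t] ω := by
        rw [← prodOneAdd_succ]; exact hpull
    _ ≤ (prodOneAdd f t ω * (1 + f t ω))⁻¹ * ((1 + f t ω) * z t ω + g t ω - h t ω) :=
        mul_le_mul_of_nonneg_left hω (inv_nonneg.2 (mul_pos hP hf1).le)
    _ = _ := by rw [prodOneAdd_succ]; field_simp

theorem ae_tendsto_and_summable_of_nonneg [IsFiniteMeasure μ]
    (hz0 : ∀ t ω, 0 ≤ z t ω) (hf0 : ∀ t ω, 0 ≤ f t ω) (hg0 : ∀ t ω, 0 ≤ g t ω)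
    (hh0 : ∀ t ω, 0 ≤ h t ω) (hz : Adapted ℱ z) (hf : Adapted ℱ f) (hg : Adapted ℱ g)
    (hh : Adapted ℱ h) (hzi : ∀ t, Integrable (z t) μ)
    (hrec : ∀ t, ∀ᵐ ω ∂μ, μ[z (t + 1)|ℱ t] ω ≤ (1 + f t ω) * z t ω + g t ω - h t ω) :
    ∀ᵐ ω ∂μ, (Summable (fun t => f t ω) ∧ Summable (fun t => g t ω)) →
      (∃ l, Tendsto (fun t => z t ω) atTop (𝓝 l)) ∧ Summable fun t => h t ω := by
  have hP0 : ∀ t ω, 0 < prodOneAdd f t ω := fun t ω => prodOneAdd_pos hf0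
  have hPinv : ∀ t, Measurable[ℱ t] fun ω => (prodOneAdd f (t + 1) ω)⁻¹ := fun t =>
    (measurable_prodOneAdd hf le_rfl).inv
  have hdiscounted := ae_tendsto_and_summable_of_summable
    (z := fun t ω => (prodOneAdd f t ω)⁻¹ * z t ω)
    (g := fun t ω => (prodOneAdd f (t + 1) ω)⁻¹ * g t ω)
    (h := fun t ω => (prodOneAdd f (t + 1) ω)⁻¹ * h t ω)
    (fun t ω => mul_nonneg (inv_nonneg.2 (hP0 t ω).le) (hz0 t ω))
    (fun t ω => mul_nonneg (inv_nonneg.2 (hP0 _ ω).le) (hg0 t ω))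
    (fun t ω => mul_nonneg (inv_nonneg.2 (hP0 _ ω).le) (hh0 t ω))
    (fun t => (measurable_prodOneAdd hf (by omega)).inv.mul (hz t))
    (fun t => (hPinv t).mul (hg t)) (fun t => (hPinv t).mul (hh t))
    (fun t => integrable_inv_prodOneAdd_mul hf0 hf (hzi t))
    (fun t => condExp_inv_prodOneAdd_mul_le hf0 hf (hzi (t + 1)) (hrec t))
  filter_upwards [hdiscounted] with ω hω ⟨hfs, hgs⟩
  obtain ⟨p, hp⟩ := tendsto_prodOneAdd hfs
  obtain ⟨⟨l, hl⟩, hhs⟩ := hω <| hgs.of_nonneg_of_le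
    (fun t => mul_nonneg (inv_nonneg.2 (hP0 _ ω).le) (hg0 t ω))
    (fun t => mul_le_of_le_one_left (hg0 t ω) (inv_prodOneAdd_le_one hf0))
  exact tendsto_and_summable_of_tendsto_inv_mul hp (hP0 · ω) (hh0 · ω) hl hhs

end Compounding

end RobbinsSiegmund

/-- Robbins–Siegmund almost-supermartingale theorem. -/
theorem robbins_siegmund {Ω : Type*} {m0 : MeasurableSpace Ω}
    {μ : Measure Ω} [IsProbabilityMeasure μ]
    (ℱ : Filtration ℕ m0)
    (z f g h : ℕ → Ω → ℝ)
    (hz_nonneg : ∀ t, ∀ᵐ ω ∂μ, 0 ≤ z t ω)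
    (hf_nonneg : ∀ t, ∀ᵐ ω ∂μ, 0 ≤ f t ω)
    (hg_nonneg : ∀ t, ∀ᵐ ω ∂μ, 0 ≤ g t ω)
    (hh_nonneg : ∀ t, ∀ᵐ ω ∂μ, 0 ≤ h t ω)
    (hz_adapted : Adapted ℱ z) (hf_adapted : Adapted ℱ f)
    (hg_adapted : Adapted ℱ g) (hh_adapted : Adapted ℱ h)
    (hz_int : ∀ t, Integrable (z t) μ)
    (hrec : ∀ t, ∀ᵐ ω ∂μ,
      (μ[z (t + 1)|ℱ t]) ω ≤ (1 + f t ω) * z t ω + g t ω - h t ω) :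
    ∀ᵐ ω ∂μ, (Summable (fun t => f t ω) ∧ Summable (fun t => g t ω)) →
      (∃ l : ℝ, Tendsto (fun t => z t ω) atTop (nhds l)) ∧
      Summable (fun t => h t ω) := by
  obtain ⟨z', hz'0, hz', hzz'⟩ := hz_adapted.exists_nonneg_ae_eq hz_nonneg
  obtain ⟨f', hf'0, hf', hff'⟩ := hf_adapted.exists_nonneg_ae_eq hf_nonneg
  obtain ⟨g', hg'0, hg', hgg'⟩ := hg_adapted.exists_nonneg_ae_eq hg_nonneg
  obtain ⟨h', hh'0, hh', hhh'⟩ := hh_adapted.exists_nonneg_ae_eq hh_nonneg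
  have hzz't : ∀ t, z' t =ᵐ[μ] z t := fun t => hzz'.mono fun ω hω => congrFun hω t
  have hrec' : ∀ t, ∀ᵐ ω ∂μ, μ[z' (t + 1)|ℱ t] ω ≤ (1 + f' t ω) * z' t ω + g' t ω - h' t ω :=
    fun t => by
      filter_upwards [condExp_congr_ae (m := ℱ t) (hzz't (t + 1)), hrec t, hzz', hff', hgg',
        hhh'] with ω hcond hω ez ef eg eh
      simpa only [hcond, congrFun ez t, congrFun ef t, congrFun eg t, congrFun eh t] using hω
  filter_upwards [RobbinsSiegmund.ae_tendsto_and_summable_of_nonneg hz'0 hf'0 hg'0 hh'0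
    hz' hf' hg' hh' (fun t => (hz_int t).congr (hzz't t).symm) hrec', hzz', hff', hgg', hhh']
    with ω hω ez ef eg eh
  rwa [← ez, ← ef, ← eg, ← eh]
end

section
/- Let (z_t), (f_t), (g_t), (α_t) be nonnegative adapted processes with E[z_{t+1}|F_t] ≤ (1+f_t) z_t + g_t - α_t z_t for all t, where almost surely Σ f_t < ∞, Σ g_t < ∞, Σ α_t = ∞. Let λ ∈ (0,1) be such that almost surely: (i) there exists T with α_t ≥ λ/t for all t ≥ T, (ii) Σ_{t≥1} (t+1)^λ g_t < ∞, and (iii) Σ_{t≥1} (α_t - λ/t) = ∞. Then t^λ z_t → 0 almost surely as t → ∞ (i.e., z_t = o(t^{-λ}) a.s.). -/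
/-!
With `y t = (t + 1) ^ λ * z t`, Bernoulli's inequality `((t + 2) / (t + 1)) ^ λ ≤ 1 + λ / (t + 1)`
turns the recursion into `E_t y (t+1) ≤ (1 + a t - c t) y t + b t` with
`a t = (1 + λ) f t + (α t - λ / (t + 1))⁻`, summable by (i),
`b t = (t + 2) ^ λ g t`, summable by (ii), and `c t = (α t - λ / (t + 1))⁺`, not summable by (iii).
By the Robbins–Siegmund theorem `y` converges and `∑ c t * y t < ∞`, so the limit is `0`.

Robbins–Siegmund: with `P t = ∏ s < t, (1 + a s)`, the process
`y t / P t + ∑ s < t, (c s y s - b s) / P (s + 1)` has supermartingale increments. Stopped once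
`∑ a` or `∑ b` exceeds `K`, it is an integrable supermartingale bounded below by `-K`, hence
converges a.s. by Doob's theorem. On `{∑ a ≤ K, ∑ b ≤ K}` it is never stopped, and since
`y t / P t ≥ 0` while `∑ s < t, c s y s / P (s + 1)` is nondecreasing, both pieces converge.
-/

open MeasureTheory Filter Topology Finset

lemma exists_sum_range_ite_eq_sum_range {p : ℕ → Prop} [DecidablePred p] (hp : Antitone p)
    (f : ℕ → ℝ) (n : ℕ) :
    ∃ k, (∀ s < k, p s) ∧ ∑ s ∈ range n, (if p s then f s else 0) = ∑ s ∈ range k, f s := by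
  induction n with
  | zero => exact ⟨0, by simp, by simp⟩
  | succ n ih =>
    by_cases hn : p n
    · refine ⟨n + 1, fun s hs => hp (Nat.lt_succ_iff.1 hs) hn, sum_congr rfl fun s hs => ?_⟩
      exact if_pos (hp (Nat.lt_succ_iff.1 (mem_range.1 hs)) hn)
    · obtain ⟨k, hk, h⟩ := ih
      exact ⟨k, hk, by rw [sum_range_succ, if_neg hn, add_zero, h]⟩

noncomputable def prodOneAdd (a : ℕ → ℝ) (n : ℕ) : ℝ := ∏ r ∈ range n, (1 + a r)

noncomputable def discountedExcess (y a b c : ℕ → ℝ) (s : ℕ) : ℝ :=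
  (prodOneAdd a (s + 1))⁻¹ * (y (s + 1) - ((1 + a s - c s) * y s + b s))

section Deterministic

variable {y a b c : ℕ → ℝ}

lemma prodOneAdd_succ (a : ℕ → ℝ) (n : ℕ) :
    prodOneAdd a (n + 1) = prodOneAdd a n * (1 + a n) :=
  prod_range_succ _ _

lemma one_le_prodOneAdd (ha : ∀ t, 0 ≤ a t) (n : ℕ) : 1 ≤ prodOneAdd a n :=
  one_le_prod fun r _ => le_add_of_nonneg_right (ha r)

lemma prodOneAdd_pos (ha : ∀ t, 0 ≤ a t) (n : ℕ) : 0 < prodOneAdd a n :=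
  zero_lt_one.trans_le (one_le_prodOneAdd ha n)

lemma inv_prodOneAdd_nonneg (ha : ∀ t, 0 ≤ a t) (n : ℕ) : 0 ≤ (prodOneAdd a n)⁻¹ :=
  inv_nonneg.2 (prodOneAdd_pos ha n).le

lemma inv_prodOneAdd_le_one (ha : ∀ t, 0 ≤ a t) (n : ℕ) : (prodOneAdd a n)⁻¹ ≤ 1 :=
  inv_le_one_of_one_le₀ (one_le_prodOneAdd ha n)

lemma prodOneAdd_le_exp_tsum (ha : ∀ t, 0 ≤ a t) (hA : Summable a) (n : ℕ) :
    prodOneAdd a n ≤ Real.exp (∑' t, a t) :=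
  calc prodOneAdd a n ≤ ∏ r ∈ range n, Real.exp (a r) :=
        prod_le_prod (fun r _ => by linarith [ha r]) fun r _ => by
          linarith [Real.add_one_le_exp (a r)]
    _ = Real.exp (∑ r ∈ range n, a r) := (Real.exp_sum _ _).symm
    _ ≤ Real.exp (∑' t, a t) := Real.exp_le_exp.2 (hA.sum_le_tsum _ fun r _ => ha r)

lemma monotone_prodOneAdd (ha : ∀ t, 0 ≤ a t) : Monotone (prodOneAdd a) :=
  monotone_nat_of_le_succ fun n => by
    rw [prodOneAdd_succ]
    exact le_mul_of_one_le_right (prodOneAdd_pos ha n).le (le_add_of_nonneg_right (ha n))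

lemma exists_tendsto_prodOneAdd (ha : ∀ t, 0 ≤ a t) (hA : Summable a) :
    ∃ p, Tendsto (prodOneAdd a) atTop (𝓝 p) :=
  ⟨_, tendsto_atTop_ciSup (monotone_prodOneAdd ha)
    ⟨_, Set.forall_mem_range.2 (prodOneAdd_le_exp_tsum ha hA)⟩⟩

lemma add_sum_discountedExcess (ha : ∀ t, 0 ≤ a t) (n : ℕ) :
    y 0 + ∑ s ∈ range n, discountedExcess y a b c s =
      (prodOneAdd a n)⁻¹ * y n + ∑ s ∈ range n, (prodOneAdd a (s + 1))⁻¹ * (c s * y s)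
        - ∑ s ∈ range n, (prodOneAdd a (s + 1))⁻¹ * b s := by
  induction n with
  | zero => simp [prodOneAdd]
  | succ n ih =>
    have hP : (prodOneAdd a (n + 1))⁻¹ * (1 + a n) = (prodOneAdd a n)⁻¹ := by
      rw [prodOneAdd_succ, mul_inv, mul_assoc,
        inv_mul_cancel₀ (add_pos_of_pos_of_nonneg one_pos (ha n)).ne', mul_one]
    rw [sum_range_succ, ← add_assoc, ih, sum_range_succ, sum_range_succ, discountedExcess, ← hP]
    ring

lemma neg_le_add_sum_discountedExcess (hy : ∀ t, 0 ≤ y t) (ha : ∀ t, 0 ≤ a t)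
    (hb : ∀ t, 0 ≤ b t) (hc : ∀ t, 0 ≤ c t) {K : ℝ} {n : ℕ}
    (hK : ∑ r ∈ range n, b r ≤ K) :
    -K ≤ y 0 + ∑ s ∈ range n, discountedExcess y a b c s := by
  rw [add_sum_discountedExcess ha]
  have hu : 0 ≤ (prodOneAdd a n)⁻¹ * y n := mul_nonneg (inv_prodOneAdd_nonneg ha n) (hy n)
  have hC : 0 ≤ ∑ s ∈ range n, (prodOneAdd a (s + 1))⁻¹ * (c s * y s) :=
    sum_nonneg fun s _ => mul_nonneg (inv_prodOneAdd_nonneg ha _) (mul_nonneg (hc s) (hy s))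
  have hB : ∑ s ∈ range n, (prodOneAdd a (s + 1))⁻¹ * b s ≤ ∑ r ∈ range n, b r :=
    sum_le_sum fun s _ => mul_le_of_le_one_left (hb s) (inv_prodOneAdd_le_one ha _)
  linarith

lemma exists_tendsto_and_summable_of_tendsto_add_sum_discountedExcess (hy : ∀ t, 0 ≤ y t)
    (ha : ∀ t, 0 ≤ a t) (hb : ∀ t, 0 ≤ b t) (hc : ∀ t, 0 ≤ c t) (hA : Summable a)
    (hB : Summable b) {L : ℝ}
    (hL : Tendsto (fun n => y 0 + ∑ s ∈ range n, discountedExcess y a b c s) atTop (𝓝 L)) :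
    (∃ l, Tendsto y atTop (𝓝 l)) ∧ Summable fun t => c t * y t := by
  set P := prodOneAdd a
  set u := fun n => (P n)⁻¹ * y n
  set C := fun n => ∑ s ∈ range n, (P (s + 1))⁻¹ * (c s * y s)
  have hCy : ∀ s, 0 ≤ (P (s + 1))⁻¹ * (c s * y s) := fun s =>
    mul_nonneg (inv_prodOneAdd_nonneg ha _) (mul_nonneg (hc s) (hy s))
  have hPb : Summable fun s => (P (s + 1))⁻¹ * b s :=
    hB.of_nonneg_of_le (fun s => mul_nonneg (inv_prodOneAdd_nonneg ha _) (hb s))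
      fun s => mul_le_of_le_one_left (hb s) (inv_prodOneAdd_le_one ha _)
  have huC : Tendsto (fun n => u n + C n) atTop (𝓝 (L + ∑' s, (P (s + 1))⁻¹ * b s)) := by
    refine (hL.add hPb.hasSum.tendsto_sum_nat).congr fun n => ?_
    rw [add_sum_discountedExcess ha]
    ring
  have hCbdd : BddAbove (Set.range C) := by
    obtain ⟨R, hR⟩ := huC.bddAbove_range
    refine ⟨R, Set.forall_mem_range.2 fun n => ?_⟩
    have hu : 0 ≤ u n := mul_nonneg (inv_prodOneAdd_nonneg ha n) (hy n)
    linarith [hR (Set.mem_range_self n)]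
  have hC : Tendsto C atTop (𝓝 (⨆ n, C n)) :=
    tendsto_atTop_ciSup (monotone_nat_of_le_succ fun n => by
      simp only [C, sum_range_succ]; linarith [hCy n]) hCbdd
  obtain ⟨p, hp⟩ := exists_tendsto_prodOneAdd ha hA
  refine ⟨⟨_, (hp.mul (huC.sub hC)).congr fun n => ?_⟩, ?_⟩
  · simp only [u, add_sub_cancel_right]
    rw [← mul_assoc, mul_inv_cancel₀ (prodOneAdd_pos ha n).ne', one_mul]
  · have hsum : Summable fun s => (P (s + 1))⁻¹ * (c s * y s) :=
      summable_of_sum_range_le hCy fun n => le_ciSup hCbdd n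
    refine (hsum.mul_left (Real.exp (∑' t, a t))).of_nonneg_of_le
      (fun s => mul_nonneg (hc s) (hy s)) fun s => ?_
    rw [← mul_assoc]
    refine le_mul_of_one_le_left (mul_nonneg (hc s) (hy s)) ?_
    rw [← div_eq_mul_inv, one_le_div (prodOneAdd_pos ha _)]
    exact prodOneAdd_le_exp_tsum ha hA _

lemma tendsto_zero_of_summable_mul_of_not_summable (hy : ∀ t, 0 ≤ y t) (hc : ∀ t, 0 ≤ c t)
    {l : ℝ} (hl : Tendsto y atTop (𝓝 l)) (hcy : Summable fun t => c t * y t)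
    (hC : ¬ Summable c) : Tendsto y atTop (𝓝 0) := by
  obtain rfl | hpos := (ge_of_tendsto' hl hy).eq_or_lt
  · exact hl
  refine absurd ?_ hC
  obtain ⟨N, hN⟩ := (hl.eventually (lt_mem_nhds (half_lt_self hpos))).exists_forall_of_atTop
  have hcyN := ((summable_nat_add_iff N).2 hcy).mul_left (2 / l)
  refine (summable_nat_add_iff N).1 (hcyN.of_nonneg_of_le (fun t => hc _) fun t => ?_)
  calc c (t + N) = 2 / l * (c (t + N) * (l / 2)) := by field_simp
    _ ≤ 2 / l * (c (t + N) * y (t + N)) := by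
      gcongr
      · exact hc _
      · exact (hN _ (Nat.le_add_left N t)).le

end Deterministic

section RobbinsSiegmund

variable {Ω : Type*} {m0 : MeasurableSpace Ω} {μ : Measure Ω} {ℱ : Filtration ℕ m0}
  {y a b c : ℕ → Ω → ℝ}

lemma MeasureTheory.Supermartingale.exists_ae_tendsto_of_bddBelow_s12 [IsFiniteMeasure μ]
    {f : ℕ → Ω → ℝ} (hf : Supermartingale f ℱ μ) {K : ℝ} (hK : ∀ n, ∀ᵐ ω ∂μ, K ≤ f n ω) :
    ∀ᵐ ω ∂μ, ∃ l, Tendsto (fun n => f n ω) atTop (𝓝 l) := by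
  have hbdd : ∀ n, eLpNorm ((-f) n) 1 μ ≤
      ENNReal.ofReal (∫ ω, f 0 ω ∂μ + 2 * |K| * μ.real Set.univ) := by
    intro n
    rw [Pi.neg_apply, eLpNorm_neg, eLpNorm_one_eq_lintegral_enorm,
      ← ofReal_integral_norm_eq_lintegral_enorm (hf.integrable n)]
    refine ENNReal.ofReal_le_ofReal ?_
    calc ∫ ω, ‖f n ω‖ ∂μ ≤ ∫ ω, (f n ω + 2 * |K|) ∂μ := by
          refine integral_mono_ae (hf.integrable n).norm
            ((hf.integrable n).add (integrable_const _)) ?_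
          filter_upwards [hK n] with ω hω
          rw [Real.norm_eq_abs]
          rcases abs_cases (f n ω) with ⟨h, _⟩ | ⟨h, _⟩ <;> linarith [neg_abs_le K, abs_nonneg K]
      _ = ∫ ω, f n ω ∂μ + 2 * |K| * μ.real Set.univ := by
          rw [integral_add (hf.integrable n) (integrable_const _), integral_const, smul_eq_mul,
            mul_comm]
      _ ≤ ∫ ω, f 0 ω ∂μ + 2 * |K| * μ.real Set.univ := by
          have h := hf.setIntegral_le (Nat.zero_le n) MeasurableSet.univ
          rw [setIntegral_univ, setIntegral_univ] at h
          linarith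
  filter_upwards [hf.neg.exists_ae_tendsto_of_bdd hbdd] with ω ⟨l, hl⟩
  exact ⟨-l, by simpa using hl.neg⟩

noncomputable def truncatedDiscount (a b : ℕ → Ω → ℝ) (K s : ℕ) (ω : Ω) : ℝ :=
  if ∑ r ∈ range (s + 1), a r ω ≤ K ∧ ∑ r ∈ range (s + 1), b r ω ≤ K then
    (prodOneAdd (a · ω) (s + 1))⁻¹
  else 0

/-- Freezing the sums once `∑ a` or `∑ b` exceeds `K` keeps the increments integrable and the
process bounded below by `-K`. -/
noncomputable def truncatedExcessSum (y a b c : ℕ → Ω → ℝ) (K n : ℕ) (ω : Ω) : ℝ :=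
  y 0 ω + ∑ s ∈ range n,
    truncatedDiscount a b K s ω * (y (s + 1) ω - ((1 + a s ω - c s ω) * y s ω + b s ω))

lemma truncatedExcessSum_eq_sum_ite (K n : ℕ) (ω : Ω) :
    truncatedExcessSum y a b c K n ω = y 0 ω + ∑ s ∈ range n,
      if ∑ r ∈ range (s + 1), a r ω ≤ K ∧ ∑ r ∈ range (s + 1), b r ω ≤ K then
        discountedExcess (y · ω) (a · ω) (b · ω) (c · ω) s
      else 0 := by
  refine congrArg _ (sum_congr rfl fun s _ => ?_)
  unfold truncatedDiscount discountedExcess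
  split_ifs <;> simp

lemma neg_le_truncatedExcessSum (hy : ∀ t ω, 0 ≤ y t ω) (ha : ∀ t ω, 0 ≤ a t ω)
    (hb : ∀ t ω, 0 ≤ b t ω) (hc : ∀ t ω, 0 ≤ c t ω) (K n : ℕ) (ω : Ω) :
    -(K : ℝ) ≤ truncatedExcessSum y a b c K n ω := by
  have hmono : ∀ {d : ℕ → Ω → ℝ}, (∀ t, 0 ≤ d t ω) →
      Monotone fun s => ∑ r ∈ range (s + 1), d r ω := fun hd _ _ hst =>
    sum_le_sum_of_subset_of_nonneg (range_subset_range.2 (Nat.succ_le_succ hst))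
      fun r _ _ => hd r
  have hanti : Antitone fun s =>
      ∑ r ∈ range (s + 1), a r ω ≤ K ∧ ∑ r ∈ range (s + 1), b r ω ≤ K :=
    fun s t hst h => ⟨(hmono (ha · ω) hst).trans h.1, (hmono (hb · ω) hst).trans h.2⟩
  obtain ⟨k, hk, hsum⟩ := exists_sum_range_ite_eq_sum_range hanti
    (discountedExcess (y · ω) (a · ω) (b · ω) (c · ω)) n
  rw [truncatedExcessSum_eq_sum_ite, hsum]
  refine neg_le_add_sum_discountedExcess (hy · ω) (ha · ω) (hb · ω) (hc · ω) ?_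
  rcases k with _ | k
  · simp
  · exact (hk k k.lt_succ_self).2

lemma truncatedExcessSum_eq_of_tsum_le (K n : ℕ) {ω : Ω} (ha : ∀ t, 0 ≤ a t ω)
    (hb : ∀ t, 0 ≤ b t ω) (hA : Summable (a · ω)) (hB : Summable (b · ω))
    (hAK : ∑' t, a t ω ≤ K) (hBK : ∑' t, b t ω ≤ K) :
    truncatedExcessSum y a b c K n ω =
      y 0 ω + ∑ s ∈ range n, discountedExcess (y · ω) (a · ω) (b · ω) (c · ω) s := by
  rw [truncatedExcessSum_eq_sum_ite]
  exact congrArg _ (sum_congr rfl fun s _ => if_pos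
    ⟨(hA.sum_le_tsum _ fun r _ => ha r).trans hAK, (hB.sum_le_tsum _ fun r _ => hb r).trans hBK⟩)

lemma truncatedDiscount_nonneg (ha : ∀ t ω, 0 ≤ a t ω) (K s : ℕ) (ω : Ω) :
    0 ≤ truncatedDiscount a b K s ω := by
  unfold truncatedDiscount
  split_ifs
  exacts [inv_prodOneAdd_nonneg (ha · ω) _, le_rfl]

lemma truncatedDiscount_le_one (ha : ∀ t ω, 0 ≤ a t ω) (K s : ℕ) (ω : Ω) :
    truncatedDiscount a b K s ω ≤ 1 := by
  unfold truncatedDiscount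
  split_ifs
  exacts [inv_prodOneAdd_le_one (ha · ω) _, zero_le_one]

lemma measurable_truncatedDiscount (ha : Adapted ℱ a) (hb : Adapted ℱ b) (K s : ℕ) :
    Measurable[ℱ s] (truncatedDiscount a b K s) := by
  have hmeas : ∀ {d : ℕ → Ω → ℝ}, Adapted ℱ d → ∀ r ∈ range (s + 1), Measurable[ℱ s] (d r) :=
    fun hd r hr => (hd r).mono (ℱ.mono (Nat.lt_succ_iff.1 (mem_range.1 hr))) le_rfl
  refine Measurable.ite ?_ ?_ measurable_const
  · exact (measurableSet_le (Finset.measurable_sum _ (hmeas ha)) measurable_const).inter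
      (measurableSet_le (Finset.measurable_sum _ (hmeas hb)) measurable_const)
  · exact (Finset.measurable_prod _ fun r hr =>
      measurable_const.add (hmeas ha r hr)).inv

lemma norm_truncatedDiscount_mul_le (hy : ∀ t ω, 0 ≤ y t ω) (ha : ∀ t ω, 0 ≤ a t ω)
    (hb : ∀ t ω, 0 ≤ b t ω) (hc : ∀ t ω, 0 ≤ c t ω) (K t : ℕ) {ω : Ω}
    (hR : 0 ≤ (1 + a t ω - c t ω) * y t ω + b t ω) :
    ‖truncatedDiscount a b K t ω * ((1 + a t ω - c t ω) * y t ω + b t ω)‖ ≤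
      (1 + K) * y t ω + K := by
  rw [norm_mul, Real.norm_of_nonneg (truncatedDiscount_nonneg ha K t ω),
    Real.norm_of_nonneg hR]
  unfold truncatedDiscount
  split_ifs with hK
  · have haK : a t ω ≤ K :=
      (single_le_sum (fun r _ => ha r ω) (self_mem_range_succ t)).trans hK.1
    have hbK : b t ω ≤ K :=
      (single_le_sum (fun r _ => hb r ω) (self_mem_range_succ t)).trans hK.2
    have hw := mul_le_of_le_one_left hR (inv_prodOneAdd_le_one (ha · ω) (t + 1))
    nlinarith [mul_nonneg (hc t ω) (hy t ω), mul_le_mul_of_nonneg_right haK (hy t ω)]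
  · rw [zero_mul]
    exact add_nonneg (mul_nonneg (by positivity) (hy t ω)) K.cast_nonneg

lemma supermartingale_truncatedExcessSum [IsFiniteMeasure μ] (hy : ∀ t ω, 0 ≤ y t ω)
    (ha : ∀ t ω, 0 ≤ a t ω) (hb : ∀ t ω, 0 ≤ b t ω) (hc : ∀ t ω, 0 ≤ c t ω)
    (hy_ad : Adapted ℱ y) (ha_ad : Adapted ℱ a) (hb_ad : Adapted ℱ b) (hc_ad : Adapted ℱ c)
    (hy_int : ∀ t, Integrable (y t) μ)
    (hrec : ∀ t, μ[y (t + 1)|ℱ t] ≤ᵐ[μ] fun ω => (1 + a t ω - c t ω) * y t ω + b t ω)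
    (K : ℕ) : Supermartingale (truncatedExcessSum y a b c K) ℱ μ := by
  set w := truncatedDiscount a b K
  set R : ℕ → Ω → ℝ := fun t ω => (1 + a t ω - c t ω) * y t ω + b t ω
  have hw : ∀ t, Measurable[ℱ t] (w t) := measurable_truncatedDiscount ha_ad hb_ad K
  have hR : ∀ t, Measurable[ℱ t] (R t) := fun t =>
    (((measurable_const.add (ha_ad t)).sub (hc_ad t)).mul (hy_ad t)).add (hb_ad t)
  have hwR : ∀ t, Integrable (w t * R t) μ := fun t => by
    refine Integrable.mono' (((hy_int t).const_mul (1 + K)).add (integrable_const (K : ℝ)))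
      (((hw t).mul (hR t)).mono (ℱ.le t) le_rfl).aestronglyMeasurable ?_
    filter_upwards [condExp_nonneg (m := ℱ t) (ae_of_all μ (hy (t + 1))), hrec t] with ω h0 hle
    exact norm_truncatedDiscount_mul_le hy ha hb hc K t (h0.trans hle)
  have hwy : ∀ t, Integrable (w t * y (t + 1)) μ := fun t =>
    (hy_int (t + 1)).bdd_mul ((hw t).mono (ℱ.le t) le_rfl).aestronglyMeasurable
      (ae_of_all μ fun ω => by
        rw [Real.norm_of_nonneg (truncatedDiscount_nonneg ha K t ω)]
        exact truncatedDiscount_le_one ha K t ω)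
  refine supermartingale_of_condExp_sub_nonneg_nat (Adapted.stronglyAdapted fun n => ?_)
    (fun n => ?_) fun t => ?_
  · refine ((hy_ad 0).mono (ℱ.mono n.zero_le) le_rfl).add
      (Finset.measurable_sum _ fun s hs => ?_)
    have hsn : s + 1 ≤ n := mem_range.1 hs
    exact ((hw s).mono (ℱ.mono (by omega)) le_rfl).mul
      (((hy_ad (s + 1)).mono (ℱ.mono hsn) le_rfl).sub ((hR s).mono (ℱ.mono (by omega)) le_rfl))
  · refine (hy_int 0).add (integrable_finsetSum _ fun s _ =>
      ((hwy s).sub (hwR s)).congr (ae_of_all μ fun ω => ?_))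
    exact (mul_sub _ _ _).symm
  · have hdiff : truncatedExcessSum y a b c K t - truncatedExcessSum y a b c K (t + 1) =
        w t * R t - w t * y (t + 1) := by
      funext ω
      simp only [truncatedExcessSum, Pi.sub_apply, Pi.mul_apply, sum_range_succ, w, R]
      ring
    rw [hdiff]
    filter_upwards [condExp_sub (m := ℱ t) (hwR t) (hwy t),
      condExp_mul_of_stronglyMeasurable_left (m := ℱ t) (hw t).stronglyMeasurable (hwy t)
        (hy_int (t + 1)), hrec t] with ω h1 h2 h3
    rw [Pi.zero_apply, h1, Pi.sub_apply, condExp_of_stronglyMeasurable (ℱ.le t)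
      ((hw t).mul (hR t)).stronglyMeasurable (hwR t), h2]
    exact sub_nonneg.2 (mul_le_mul_of_nonneg_left h3 (truncatedDiscount_nonneg ha K t ω))

theorem robbinsSiegmund [IsFiniteMeasure μ] (hy : ∀ t ω, 0 ≤ y t ω)
    (ha : ∀ t ω, 0 ≤ a t ω) (hb : ∀ t ω, 0 ≤ b t ω) (hc : ∀ t ω, 0 ≤ c t ω)
    (hy_ad : Adapted ℱ y) (ha_ad : Adapted ℱ a) (hb_ad : Adapted ℱ b) (hc_ad : Adapted ℱ c)
    (hy_int : ∀ t, Integrable (y t) μ)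
    (hrec : ∀ t, μ[y (t + 1)|ℱ t] ≤ᵐ[μ] fun ω => (1 + a t ω - c t ω) * y t ω + b t ω)
    (hA : ∀ᵐ ω ∂μ, Summable (a · ω)) (hB : ∀ᵐ ω ∂μ, Summable (b · ω)) :
    ∀ᵐ ω ∂μ, (∃ l, Tendsto (y · ω) atTop (𝓝 l)) ∧ Summable fun t => c t ω * y t ω := by
  have hconv : ∀ᵐ ω ∂μ, ∀ K : ℕ,
      ∃ L, Tendsto (fun n => truncatedExcessSum y a b c K n ω) atTop (𝓝 L) :=
    ae_all_iff.2 fun K =>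
      (supermartingale_truncatedExcessSum hy ha hb hc hy_ad ha_ad hb_ad hc_ad hy_int hrec
        K).exists_ae_tendsto_of_bddBelow_s12 fun n =>
          ae_of_all μ (neg_le_truncatedExcessSum hy ha hb hc K n)
  filter_upwards [hconv, hA, hB] with ω hX hAω hBω
  obtain ⟨K, hK⟩ := exists_nat_ge (max (∑' t, a t ω) (∑' t, b t ω))
  obtain ⟨L, hL⟩ := hX K
  refine exists_tendsto_and_summable_of_tendsto_add_sum_discountedExcess (hy · ω) (ha · ω)
    (hb · ω) (hc · ω) hAω hBω (hL.congr fun n => ?_)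
  exact truncatedExcessSum_eq_of_tsum_le K n (ha · ω) (hb · ω) hAω hBω
    ((le_max_left _ _).trans hK) ((le_max_right _ _).trans hK)

theorem robbinsSiegmund_ae_tendsto_zero [IsFiniteMeasure μ] (hy : ∀ t ω, 0 ≤ y t ω)
    (ha : ∀ t ω, 0 ≤ a t ω) (hb : ∀ t ω, 0 ≤ b t ω) (hc : ∀ t ω, 0 ≤ c t ω)
    (hy_ad : Adapted ℱ y) (ha_ad : Adapted ℱ a) (hb_ad : Adapted ℱ b) (hc_ad : Adapted ℱ c)
    (hy_int : ∀ t, Integrable (y t) μ)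
    (hrec : ∀ t, μ[y (t + 1)|ℱ t] ≤ᵐ[μ] fun ω => (1 + a t ω - c t ω) * y t ω + b t ω)
    (hA : ∀ᵐ ω ∂μ, Summable (a · ω)) (hB : ∀ᵐ ω ∂μ, Summable (b · ω))
    (hC : ∀ᵐ ω ∂μ, ¬ Summable (c · ω)) :
    ∀ᵐ ω ∂μ, Tendsto (y · ω) atTop (𝓝 0) := by
  filter_upwards [robbinsSiegmund hy ha hb hc hy_ad ha_ad hb_ad hc_ad hy_int hrec hA hB, hC]
    with ω ⟨⟨l, hl⟩, hcy⟩ hCω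
  exact tendsto_zero_of_summable_mul_of_not_summable (hy · ω) (hc · ω) hl hcy hCω

end RobbinsSiegmund

section Rate

variable {lam : ℝ} {α : ℕ → ℝ}

lemma rpow_add_two_le (hl0 : 0 ≤ lam) (hl1 : lam ≤ 1) (t : ℕ) :
    ((t : ℝ) + 2) ^ lam ≤ (1 + lam / (t + 1)) * ((t : ℝ) + 1) ^ lam := by
  have ht : (0 : ℝ) < t + 1 := by positivity
  have hsplit : (t : ℝ) + 2 = (1 + 1 / (t + 1)) * (t + 1) := by field_simp; ring
  rw [hsplit, Real.mul_rpow (by positivity) ht.le]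
  gcongr
  simpa only [mul_one_div] using
    rpow_one_add_le_one_add_mul_self (s := 1 / ((t : ℝ) + 1)) (by linarith [one_div_pos.2 ht])
      hl0 hl1

lemma rpow_add_two_mul_le (hl0 : 0 ≤ lam) (hl1 : lam ≤ 1) (t : ℕ) {F A Z : ℝ} (hF : 0 ≤ F)
    (hA : 0 ≤ A) (hZ : 0 ≤ Z) :
    ((t : ℝ) + 2) ^ lam * ((1 + F - A) * Z) ≤
      (1 + (1 + lam) * F + lam / (t + 1) - A) * (((t : ℝ) + 1) ^ lam * Z) := by
  set v := ((t : ℝ) + 1) ^ lam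
  set δ := lam / ((t : ℝ) + 1)
  have hv : 0 ≤ v := by positivity
  have hvw : v ≤ ((t : ℝ) + 2) ^ lam := Real.rpow_le_rpow (by positivity) (by linarith) hl0
  have hwv := rpow_add_two_le hl0 hl1 t
  have hδ : 0 ≤ δ := by positivity
  have hδl : δ ≤ lam := div_le_self hl0 (by linarith [t.cast_nonneg (α := ℝ)])
  have key : ((t : ℝ) + 2) ^ lam * (1 + F - A) ≤ (1 + (1 + lam) * F + δ - A) * v := by
    rcases le_total (1 + F - A) 0 with h | h
    · nlinarith [mul_le_mul_of_nonpos_right hvw h, mul_nonneg hv (mul_nonneg hl0 hF)]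
    · nlinarith [mul_le_mul_of_nonneg_right hwv h, mul_nonneg hv (mul_nonneg (sub_nonneg.2 hδl) hF),
        mul_nonneg hv (mul_nonneg hδ hA)]
  calc ((t : ℝ) + 2) ^ lam * ((1 + F - A) * Z) = ((t : ℝ) + 2) ^ lam * (1 + F - A) * Z := by ring
    _ ≤ (1 + (1 + lam) * F + δ - A) * v * Z := mul_le_mul_of_nonneg_right key hZ
    _ = _ := by ring

lemma exists_div_add_one_le_div_le (hl0 : 0 ≤ lam)
    (hT : ∃ T : ℕ, 1 ≤ T ∧ ∀ t ≥ T, lam / (t : ℝ) ≤ α t) :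
    ∃ T : ℕ, ∀ t ≥ T, lam / ((t : ℝ) + 1) ≤ lam / t ∧ lam / (t : ℝ) ≤ α t := by
  obtain ⟨T, hT1, hT⟩ := hT
  refine ⟨T, fun t ht => ⟨div_le_div_of_nonneg_left hl0 ?_ (by linarith), hT t ht⟩⟩
  exact_mod_cast (hT1.trans ht)

lemma summable_negPart_sub_div (hl0 : 0 ≤ lam)
    (hT : ∃ T : ℕ, 1 ≤ T ∧ ∀ t ≥ T, lam / (t : ℝ) ≤ α t) :
    Summable fun t : ℕ => (α t - lam / ((t : ℝ) + 1))⁻ := by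
  obtain ⟨T, hT⟩ := exists_div_add_one_le_div_le hl0 hT
  refine summable_of_ne_finset_zero (s := range T) fun t ht => negPart_eq_zero.2 ?_
  have := hT t (not_lt.1 (mt mem_range.2 ht))
  linarith [this.1, this.2]

lemma not_summable_posPart_sub_div (hl0 : 0 ≤ lam)
    (hT : ∃ T : ℕ, 1 ≤ T ∧ ∀ t ≥ T, lam / (t : ℝ) ≤ α t)
    (hα : ¬ Summable fun t : ℕ => α (t + 1) - lam / ((t : ℝ) + 1)) :
    ¬ Summable fun t : ℕ => (α t - lam / ((t : ℝ) + 1))⁺ := by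
  obtain ⟨T, hT⟩ := exists_div_add_one_le_div_le hl0 hT
  refine fun hc => hα ((summable_nat_add_iff T).1 ?_)
  refine ((summable_nat_add_iff (T + 1)).2 hc).of_nonneg_of_le (fun n => ?_) fun n => ?_
  all_goals
    have h := hT (n + T + 1) (by omega)
    push_cast at h ⊢
  · linarith [h.2]
  · simp only [← add_assoc]
    exact (sub_le_sub_left h.1 _).trans (le_posPart _)

lemma summable_rpow_add_two_mul_posPart (hl0 : 0 ≤ lam) {g : ℕ → ℝ} (hg0 : ∀ t, 0 ≤ g t)
    (hg : Summable fun t : ℕ => ((t : ℝ) + 1) ^ lam * g t) :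
    Summable fun t : ℕ => ((t : ℝ) + 2) ^ lam * (g t)⁺ := by
  refine (hg.mul_left (2 ^ lam)).of_nonneg_of_le (fun t => by positivity) fun t => ?_
  rw [posPart_of_nonneg (hg0 t), ← mul_assoc, ← Real.mul_rpow (by norm_num) (by positivity)]
  exact mul_le_mul_of_nonneg_right (Real.rpow_le_rpow (by positivity) (by linarith) hl0) (hg0 t)

end Rate

section Rescaling

variable {Ω : Type*} {m0 : MeasurableSpace Ω} {μ : Measure Ω} {ℱ : Filtration ℕ m0}
  {z f g α : ℕ → Ω → ℝ} {lam : ℝ}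

noncomputable def rescale (lam : ℝ) (z : ℕ → Ω → ℝ) (t : ℕ) (ω : Ω) : ℝ :=
  ((t : ℝ) + 1) ^ lam * (z t ω)⁺

lemma rescale_nonneg (t : ℕ) (ω : Ω) : 0 ≤ rescale lam z t ω := by
  unfold rescale
  positivity

lemma adapted_rescale (hz : Adapted ℱ z) : Adapted ℱ (rescale lam z) := fun t =>
  ((hz t).max measurable_const).const_mul _

lemma integrable_rescale (hz : ∀ t, Integrable (z t) μ) (t : ℕ) :
    Integrable (rescale lam z t) μ :=
  (hz t).pos_part.const_mul _

lemma rpow_mul_le_rescale (hl0 : 0 ≤ lam) {t : ℕ} {ω : Ω} (hz : 0 ≤ z t ω) :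
    (t : ℝ) ^ lam * z t ω ≤ rescale lam z t ω := by
  rw [rescale, posPart_of_nonneg hz]
  exact mul_le_mul_of_nonneg_right (Real.rpow_le_rpow t.cast_nonneg (by linarith) hl0) hz

lemma condExp_rescale_succ_le (hl0 : 0 ≤ lam) (hl1 : lam ≤ 1)
    (hz : ∀ t, ∀ᵐ ω ∂μ, 0 ≤ z t ω) (hf : ∀ t, ∀ᵐ ω ∂μ, 0 ≤ f t ω)
    (hg : ∀ t, ∀ᵐ ω ∂μ, 0 ≤ g t ω) (hα : ∀ t, ∀ᵐ ω ∂μ, 0 ≤ α t ω)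
    (hrec : ∀ t, ∀ᵐ ω ∂μ,
      (μ[z (t + 1)|ℱ t]) ω ≤ (1 + f t ω) * z t ω + g t ω - α t ω * z t ω) (t : ℕ) :
    μ[rescale lam z (t + 1)|ℱ t] ≤ᵐ[μ] fun ω =>
      (1 + ((1 + lam) * (f t ω)⁺ + (α t ω - lam / ((t : ℝ) + 1))⁻)
        - (α t ω - lam / ((t : ℝ) + 1))⁺) * rescale lam z t ω + ((t : ℝ) + 2) ^ lam * (g t ω)⁺ := by
  have heq : rescale lam z (t + 1) =ᵐ[μ] ((t : ℝ) + 2) ^ lam • z (t + 1) := by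
    filter_upwards [hz (t + 1)] with ω h
    simp only [rescale, posPart_of_nonneg h, Pi.smul_apply, smul_eq_mul]
    push_cast
    ring_nf
  filter_upwards [(condExp_congr_ae heq).trans (condExp_smul _ _ (ℱ t)), hrec t, hz t, hf t, hg t,
    hα t] with ω hce hω hzω hfω hgω hαω
  have hcoef : 1 + ((1 + lam) * (f t ω)⁺ + (α t ω - lam / ((t : ℝ) + 1))⁻)
      - (α t ω - lam / ((t : ℝ) + 1))⁺ = 1 + (1 + lam) * f t ω + lam / ((t : ℝ) + 1) - α t ω := by
    rw [posPart_of_nonneg hfω]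
    linarith [posPart_sub_negPart (α t ω - lam / ((t : ℝ) + 1))]
  rw [hce, Pi.smul_apply, smul_eq_mul, hcoef]
  simp only [rescale, posPart_of_nonneg hzω, posPart_of_nonneg hgω]
  have hstep := rpow_add_two_mul_le hl0 hl1 t hfω hαω hzω
  have hpow : (0 : ℝ) ≤ ((t : ℝ) + 2) ^ lam := by positivity
  nlinarith [mul_le_mul_of_nonneg_left hω hpow]

end Rescaling

theorem sa_rate_of_convergence_general {Ω : Type*} {m0 : MeasurableSpace Ω}
    {μ : Measure Ω} [IsProbabilityMeasure μ]
    (ℱ : Filtration ℕ m0)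
    (z f g α : ℕ → Ω → ℝ)
    (hz_nonneg : ∀ t, ∀ᵐ ω ∂μ, 0 ≤ z t ω)
    (hf_nonneg : ∀ t, ∀ᵐ ω ∂μ, 0 ≤ f t ω)
    (hg_nonneg : ∀ t, ∀ᵐ ω ∂μ, 0 ≤ g t ω)
    (hα_nonneg : ∀ t, ∀ᵐ ω ∂μ, 0 ≤ α t ω)
    (hz_adapted : Adapted ℱ z) (hf_adapted : Adapted ℱ f)
    (hg_adapted : Adapted ℱ g) (hα_adapted : Adapted ℱ α)
    (hz_int : ∀ t, Integrable (z t) μ)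
    (hrec : ∀ t, ∀ᵐ ω ∂μ,
      (μ[z (t + 1)|ℱ t]) ω ≤ (1 + f t ω) * z t ω + g t ω - α t ω * z t ω)
    (hf_sum : ∀ᵐ ω ∂μ, Summable (fun t => f t ω))
    (lam : ℝ) (hlam : lam ∈ Set.Ioo (0:ℝ) 1)
    (hstep : ∀ᵐ ω ∂μ, ∃ T : ℕ, 1 ≤ T ∧ ∀ t ≥ T, lam / (t : ℝ) ≤ α t ω)
    (hg_rate : ∀ᵐ ω ∂μ, Summable (fun t : ℕ => ((t : ℝ) + 1) ^ lam * g t ω))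
    (hα_rate : ∀ᵐ ω ∂μ,
      ¬ Summable (fun t : ℕ => α (t + 1) ω - lam / ((t : ℝ) + 1))) :
    ∀ᵐ ω ∂μ, Tendsto (fun t : ℕ => (t : ℝ) ^ lam * z t ω) atTop (nhds 0) := by
  obtain ⟨hl0, hl1⟩ := hlam
  have hy := robbinsSiegmund_ae_tendsto_zero (ℱ := ℱ) (y := rescale lam z)
    (a := fun t ω => (1 + lam) * (f t ω)⁺ + (α t ω - lam / ((t : ℝ) + 1))⁻)
    (b := fun t ω => ((t : ℝ) + 2) ^ lam * (g t ω)⁺)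
    (c := fun t ω => (α t ω - lam / ((t : ℝ) + 1))⁺)
    rescale_nonneg (fun t ω => by positivity) (fun t ω => by positivity)
    (fun t ω => posPart_nonneg _) (adapted_rescale hz_adapted)
    (fun t => (((hf_adapted t).max measurable_const).const_mul _).add
      (((hα_adapted t).sub measurable_const).neg.max measurable_const))
    (fun t => ((hg_adapted t).max measurable_const).const_mul _)
    (fun t => ((hα_adapted t).sub measurable_const).max measurable_const)
    (integrable_rescale hz_int)
    (condExp_rescale_succ_le hl0.le hl1.le hz_nonneg hf_nonneg hg_nonneg hα_nonneg hrec)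
    (by filter_upwards [hf_sum, ae_all_iff.2 hf_nonneg, hstep] with ω hfω hf0 hT
        exact ((hfω.congr fun t => (posPart_of_nonneg (hf0 t)).symm).mul_left _).add
          (summable_negPart_sub_div hl0.le hT))
    (by filter_upwards [hg_rate, ae_all_iff.2 hg_nonneg] with ω hgω hg0
        exact summable_rpow_add_two_mul_posPart hl0.le hg0 hgω)
    (by filter_upwards [hstep, hα_rate] with ω hT hαω
        exact not_summable_posPart_sub_div hl0.le hT hαω)
  filter_upwards [hy, ae_all_iff.2 hz_nonneg] with ω hyω hz
  exact squeeze_zero (fun t => mul_nonneg (by positivity) (hz t))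
    (fun t => rpow_mul_le_rescale hl0.le (hz t)) hyω

/-- Rate-of-convergence theorem: under the recursion
`E[z_{t+1}|F_t] ≤ (1+f_t)z_t + g_t - α_t z_t` with the stated summability and
step-size conditions for `λ ∈ (0,1)`, one has `z_t = o(t^{-λ})` almost surely. -/
theorem sa_rate_of_convergence {Ω : Type*} {m0 : MeasurableSpace Ω}
    {μ : Measure Ω} [IsProbabilityMeasure μ]
    (ℱ : Filtration ℕ m0)
    (z f g α : ℕ → Ω → ℝ)
    (hz_nonneg : ∀ t, ∀ᵐ ω ∂μ, 0 ≤ z t ω)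
    (hf_nonneg : ∀ t, ∀ᵐ ω ∂μ, 0 ≤ f t ω)
    (hg_nonneg : ∀ t, ∀ᵐ ω ∂μ, 0 ≤ g t ω)
    (hα_nonneg : ∀ t, ∀ᵐ ω ∂μ, 0 ≤ α t ω)
    (hz_adapted : Adapted ℱ z) (hf_adapted : Adapted ℱ f)
    (hg_adapted : Adapted ℱ g) (hα_adapted : Adapted ℱ α)
    (hz_int : ∀ t, Integrable (z t) μ)
    (hrec : ∀ t, ∀ᵐ ω ∂μ,
      (μ[z (t + 1)|ℱ t]) ω ≤ (1 + f t ω) * z t ω + g t ω - α t ω * z t ω)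
    (hf_sum : ∀ᵐ ω ∂μ, Summable (fun t => f t ω))
    (hg_sum : ∀ᵐ ω ∂μ, Summable (fun t => g t ω))
    (hα_div : ∀ᵐ ω ∂μ, ¬ Summable (fun t => α t ω))
    (lam : ℝ) (hlam : lam ∈ Set.Ioo (0:ℝ) 1)
    (hstep : ∀ᵐ ω ∂μ, ∃ T : ℕ, 1 ≤ T ∧ ∀ t ≥ T, lam / (t : ℝ) ≤ α t ω)
    (hg_rate : ∀ᵐ ω ∂μ, Summable (fun t : ℕ => ((t : ℝ) + 1) ^ lam * g t ω))
    (hα_rate : ∀ᵐ ω ∂μ,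
      ¬ Summable (fun t : ℕ => α (t + 1) ω - lam / ((t : ℝ) + 1))) :
    ∀ᵐ ω ∂μ, Tendsto (fun t : ℕ => (t : ℝ) ^ lam * z t ω) atTop (nhds 0) :=
  sa_rate_of_convergence_general ℱ z f g α hz_nonneg hf_nonneg hg_nonneg hα_nonneg hz_adapted
    hf_adapted hg_adapted hα_adapted hz_int hrec hf_sum lam hlam hstep hg_rate hα_rate
end
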